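/- Let A and B be real N×m matrices, Y a real d×m matrix, and β > 0, and suppose A * Bᵀ = 0 and Y * Bᵀ = 0. Let X be the (2N)×m matrix stacking A on top of B. Then X * Xᵀ + β • 1 is the 2×2 block-diagonal matrix with diagonal blocks A * Aᵀ + β • 1 and B * Bᵀ + β • 1, its inverse is the block-diagonal matrix with diagonal blocks (A * Aᵀ + β • 1)⁻¹ and (B * Bᵀ + β • 1)⁻¹, and the ridge readout matrix W = Y * Xᵀ * (X * Xᵀ + β • 1)⁻¹ equals [Y * Aᵀ * (A * Aᵀ + β • 1)⁻¹, 0]; in particular its square-readout block is zero and its linear-readout block coincides with the ridge readout trained on the linear response data alone. -/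

import Mathlib

open Matrix

section

variable {R l n m : Type*} [Fintype m]

theorem fromRows_mul_transpose_fromRows [CommSemiring R] (A : Matrix l m R) (B : Matrix n m R) :
    fromRows A B * (fromRows A B)ᵀ = fromBlocks (A * Aᵀ) (A * Bᵀ) (B * Aᵀ) (B * Bᵀ) := by
  rw [transpose_fromRows, fromRows_mul_fromCols]

variable [DecidableEq l] [DecidableEq n]

theorem fromRows_mul_transpose_fromRows_add_smul_one [CommSemiring R]
    {A : Matrix l m R} {B : Matrix n m R} (hAB : A * Bᵀ = 0) (β : R) :
    fromRows A B * (fromRows A B)ᵀ + β • (1 : Matrix (l ⊕ n) (l ⊕ n) R) =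
      fromBlocks (A * Aᵀ + β • 1) 0 0 (B * Bᵀ + β • 1) := by
  have hBA : B * Aᵀ = 0 := by rw [← transpose_transpose B, ← transpose_mul, hAB, transpose_zero]
  rw [fromRows_mul_transpose_fromRows, hAB, hBA, ← fromBlocks_one, fromBlocks_smul,
    fromBlocks_add]
  simp

variable [Fintype l] [Fintype n]

theorem posDef_mul_transpose_add_smul_one (A : Matrix l m ℝ) {β : ℝ} (hβ : 0 < β) :
    (A * Aᵀ + β • (1 : Matrix l l ℝ)).PosDef := by
  rw [← conjTranspose_eq_transpose_of_trivial]
  exact PosDef.posSemidef_add (posSemidef_self_mul_conjTranspose A) (PosDef.one.smul hβ)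

theorem inv_fromBlocks_zero_zero [CommRing R] {M : Matrix l l R} {P : Matrix n n R}
    (hM : IsUnit M) (hP : IsUnit P) :
    (fromBlocks M 0 0 P)⁻¹ = fromBlocks M⁻¹ 0 0 P⁻¹ := by
  simp [inv_fromBlocks_zero₂₁_of_isUnit_iff M 0 P (iff_of_true hM hP)]

end

/-- If the linear and square response blocks are orthogonal (`A Bᵀ = 0`) and the
targets are orthogonal to the square block (`Y Bᵀ = 0`), then the ridge Gram matrix is
block diagonal, so is its inverse, and the ridge readout `W = Y Xᵀ (X Xᵀ + β I)⁻¹`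
equals `[Y Aᵀ (A Aᵀ + β I)⁻¹, 0]`: its square-readout block vanishes and its linear
block is the ridge readout trained on the linear response data alone. -/
theorem ridge_block_diagonal_readout {N m d : ℕ}
    (A B : Matrix (Fin N) (Fin m) ℝ) (Y : Matrix (Fin d) (Fin m) ℝ)
    (β : ℝ) (hβ : 0 < β)
    (hAB : A * B.transpose = 0) (hYB : Y * B.transpose = 0) :
    let X : Matrix (Fin N ⊕ Fin N) (Fin m) ℝ := Matrix.fromRows A B
    (X * X.transpose + β • (1 : Matrix (Fin N ⊕ Fin N) (Fin N ⊕ Fin N) ℝ) =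
        Matrix.fromBlocks (A * A.transpose + β • 1) 0 0 (B * B.transpose + β • 1)) ∧
      ((X * X.transpose + β • (1 : Matrix (Fin N ⊕ Fin N) (Fin N ⊕ Fin N) ℝ))⁻¹ =
        Matrix.fromBlocks (A * A.transpose + β • 1)⁻¹ 0 0 (B * B.transpose + β • 1)⁻¹) ∧
      (Y * X.transpose *
          (X * X.transpose + β • (1 : Matrix (Fin N ⊕ Fin N) (Fin N ⊕ Fin N) ℝ))⁻¹ =
        Matrix.fromCols (Y * A.transpose * (A * A.transpose + β • 1)⁻¹) 0) := by
  intro X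
  have hgram := fromRows_mul_transpose_fromRows_add_smul_one hAB β
  have hinv : (X * Xᵀ + β • (1 : Matrix (Fin N ⊕ Fin N) (Fin N ⊕ Fin N) ℝ))⁻¹ =
      fromBlocks (A * Aᵀ + β • 1)⁻¹ 0 0 (B * Bᵀ + β • 1)⁻¹ := by
    rw [hgram, inv_fromBlocks_zero_zero (posDef_mul_transpose_add_smul_one A hβ).isUnit
      (posDef_mul_transpose_add_smul_one B hβ).isUnit]
  refine ⟨hgram, hinv, ?_⟩
  rw [hinv, transpose_fromRows, mul_fromCols, hYB, fromCols_mul_fromBlocks]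
  simp
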